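/- arXiv:2401.06363 — 3 statements merged into one kernel-verified Lean document; each statement's English description precedes it below -/
import Mathlib

section
/- Let m ∈ ℤ_{>0}. There exists C > 0 such that for every φ ∈ L¹_m(ℝⁿ) and every t > 0: Σ_{|α|=m} ‖[x^α, e^{tνΔ}]φ‖_{L¹} ≤ C { t^{1/2} ‖|x|^{m−1} φ‖_{L¹} + (t^{1/2} + t^{m/2}) ‖φ‖_{L¹} }. -/
open MeasureTheory Real Filter
open scoped ENNReal Topology BigOperators

noncomputable section

abbrev Eu (n : ℕ) := EuclideanSpace ℝ (Fin n)

/-- complex Gaussian `G_{tν}` -/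
def Gf (n : ℕ) (ν : ℂ) (t : ℝ) (x : Eu n) : ℂ :=
  ((4 * Real.pi * t : ℝ) * ν) ^ (-(n:ℂ)/2) * Complex.exp (-((‖x‖^2 : ℝ) : ℂ) / (4 * t * ν))

/-- parabolic dilation -/
def dil {n : ℕ} (t : ℝ) (φ : Eu n → ℂ) : Eu n → ℂ :=
  fun x => ((t ^ (-(n:ℝ)/2) : ℝ) : ℂ) * φ ((t ^ (-(1:ℝ)/2) : ℝ) • x)

/-- convolution -/
def conv {n : ℕ} (f g : Eu n → ℂ) : Eu n → ℂ := fun x => ∫ y, f (x - y) * g y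

/-- CGL semigroup -/
def cgl (n : ℕ) (ν : ℂ) (t : ℝ) (φ : Eu n → ℂ) : Eu n → ℂ := conv (Gf n ν t) φ

/-- partial derivative -/
def pd {n : ℕ} (j : Fin n) (f : Eu n → ℂ) : Eu n → ℂ :=
  fun x => fderiv ℝ f x (EuclideanSpace.single j 1)

/-- multi-index derivative ∂^α -/
def mderiv {n : ℕ} (α : Fin n → ℕ) (f : Eu n → ℂ) : Eu n → ℂ :=
  (List.finRange n).foldr (fun j g => (pd j)^[α j] g) f

def msum {n : ℕ} (α : Fin n → ℕ) : ℕ := ∑ j, α j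

def xmon {n : ℕ} (α : Fin n → ℕ) (x : Eu n) : ℝ := ∏ j, (x j) ^ (α j)

def mfact {n : ℕ} (α : Fin n → ℕ) : ℕ := ∏ j, Nat.factorial (α j)

/-- complex Hermite polynomial h_{ν,α} -/
def hpoly {n : ℕ} (ν : ℂ) (α : Fin n → ℕ) (x : Eu n) : ℂ :=
  ∑ β ∈ Finset.Iic α, if ∀ j, 2 * β j ≤ α j then
    ((-1:ℂ)^(msum β) * (mfact α : ℂ)) / ((mfact β : ℂ) * (mfact (α - 2 • β) : ℂ))
      * ν ^ (-(msum (α - β) : ℤ)) * ((xmon (α - 2 • β) x : ℝ) : ℂ)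
  else 0

/-- multi-indices of total degree k -/
def multiIdx (n k : ℕ) : Finset (Fin n → ℕ) :=
  Finset.filter (fun β => msum β = k) (Finset.Iic (fun _ => k))

/-- moment M_β(φ) -/
def mom {n : ℕ} (β : Fin n → ℕ) (φ : Eu n → ℂ) : ℂ :=
  ((mfact β : ℂ))⁻¹ * ∫ x, ((xmon β x : ℝ) : ℂ) * φ x

/-- asymptotic profile Λ_{α,N}(t;φ) -/
def Lam {n : ℕ} (ν : ℂ) (α : Fin n → ℕ) (N : ℕ) (t : ℝ) (φ : Eu n → ℂ) : Eu n → ℂ :=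
  fun x => (-2:ℂ) ^ (-(msum α : ℤ)) * ((t ^ (-(msum α : ℝ)/2) : ℝ) : ℂ) *
    ∑ k ∈ Finset.range (N+1), (2:ℂ) ^ (-(k:ℤ)) * ((t ^ (-(k:ℝ)/2) : ℝ) : ℂ) *
      ∑ β ∈ multiIdx n k, mom β φ * dil t (fun y => hpoly ν (α+β) y * Gf n ν 1 y) x

/-- weighted L¹ space membership -/
def L1m {n : ℕ} (m : ℕ) (φ : Eu n → ℂ) : Prop :=
  ∀ α : Fin n → ℕ, msum α ≤ m → Integrable (fun x => ((xmon α x : ℝ) : ℂ) * φ x)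

end

/-!
For `|α| = m` the commutator is the integral operator with kernel
`(x^α - y^α) G_{tν}(x - y)`. Expanding `x^α = ((x - y) + y)^α` binomially and interpolating each
term gives `|x^α - y^α| ≤ 2^m (|x - y| |y|^{m-1} + |x - y|^m)`, so by Tonelli and translation
invariance the `L¹` norm of the commutator is at most
`2^m (‖|z| G_{tν}‖₁ ‖|y|^{m-1} φ‖₁ + ‖|z|^m G_{tν}‖₁ ‖φ‖₁)`.
Since `G_{tν}` is the parabolic dilation of `G_ν`, `‖|z|^j G_{tν}‖₁ = t^{j/2} ‖|z|^j G_ν‖₁`, and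
these moments are finite because `|G_ν|` is a real Gaussian.
-/

open Finset

lemma pow_mul_pow_sub_le {s r : ℝ} (hs : 0 ≤ s) (hr : 0 ≤ r) {j m : ℕ} (hj : 1 ≤ j)
    (hjm : j ≤ m) : s ^ j * r ^ (m - j) ≤ s * r ^ (m - 1) + s ^ m := by
  obtain ⟨i, rfl⟩ := Nat.exists_eq_add_of_le' hj
  have hmax : max s r ^ (m - 1) ≤ r ^ (m - 1) + s ^ (m - 1) := by
    rcases max_choice s r with h | h <;> rw [h] <;>
      linarith [pow_nonneg hs (m - 1), pow_nonneg hr (m - 1)]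
  calc s ^ (i + 1) * r ^ (m - (i + 1)) = s * (s ^ i * r ^ (m - (i + 1))) := by ring
    _ ≤ s * (max s r ^ i * max s r ^ (m - (i + 1))) := by
      gcongr
      exacts [le_max_left s r, le_max_right s r]
    _ = s * max s r ^ (m - 1) := by rw [← pow_add]; congr 2; omega
    _ ≤ s * (r ^ (m - 1) + s ^ (m - 1)) := by gcongr
    _ = s * r ^ (m - 1) + s ^ m := by rw [mul_add, ← pow_succ']; congr 2; omega

lemma Complex.ofReal_mul_cpow {r : ℝ} (hr : 0 < r) {w : ℂ} (hw : w ≠ 0) (s : ℂ) :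
    ((r : ℂ) * w) ^ s = (r : ℂ) ^ s * w ^ s := by
  have hr' : (r : ℂ) ≠ 0 := Complex.ofReal_ne_zero.2 hr.ne'
  rw [Complex.cpow_def_of_ne_zero (mul_ne_zero hr' hw), Complex.log_ofReal_mul hr hw, add_mul,
    Complex.exp_add, Complex.ofReal_log hr.le, ← Complex.cpow_def_of_ne_zero hr',
    ← Complex.cpow_def_of_ne_zero hw]

lemma pow_mul_exp_neg_mul_sq_le {b r : ℝ} (hb : 0 < b) (hr : 0 ≤ r) (j : ℕ) :
    r ^ j * rexp (-b * r ^ 2)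
      ≤ rexp (-b * r ^ 2) + (j.factorial : ℝ) * (2 / b) ^ j * rexp (-(b / 2) * r ^ 2) := by
  have hpow : r ^ j ≤ 1 + (r ^ 2) ^ j := by
    rcases le_total r 1 with h | h
    · linarith [pow_le_one₀ hr h (n := j), pow_nonneg (sq_nonneg r) j]
    · have : r ^ j ≤ (r ^ 2) ^ j := pow_le_pow_left₀ hr (by nlinarith) j
      linarith
  have hexp : (r ^ 2) ^ j ≤ (j.factorial : ℝ) * (2 / b) ^ j * rexp (b / 2 * r ^ 2) := by
    have h := pow_div_factorial_le_exp (x := b / 2 * r ^ 2) (by positivity) j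
    rw [div_le_iff₀ (by positivity)] at h
    calc (r ^ 2) ^ j = (2 / b) ^ j * (b / 2 * r ^ 2) ^ j := by
          rw [← mul_pow]; congr 1; field_simp
      _ ≤ (2 / b) ^ j * (rexp (b / 2 * r ^ 2) * (j.factorial : ℝ)) := by gcongr
      _ = _ := by ring
  calc r ^ j * rexp (-b * r ^ 2) ≤ (1 + (r ^ 2) ^ j) * rexp (-b * r ^ 2) := by gcongr
    _ ≤ (1 + (j.factorial : ℝ) * (2 / b) ^ j * rexp (b / 2 * r ^ 2)) * rexp (-b * r ^ 2) := by
      gcongr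
    _ = _ := by
      rw [add_mul, one_mul, mul_assoc, ← Real.exp_add]
      ring_nf

section Convolution

variable {G : Type*} [MeasurableSpace G] [AddGroup G] [MeasurableAdd₂ G] [MeasurableNeg G]
  {μ : Measure G} [SFinite μ] [μ.IsAddRightInvariant] {f g : G → ℝ≥0∞}

lemma aemeasurable_sub_mul (hf : AEMeasurable f μ) (hg : AEMeasurable g μ) :
    AEMeasurable (fun p : G × G => f (p.1 - p.2) * g p.2) (μ.prod μ) :=
  (hf.comp_quasiMeasurePreserving (quasiMeasurePreserving_sub_of_right_invariant μ μ)).mul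
    hg.comp_snd

lemma lintegral_lintegral_sub_mul (hf : AEMeasurable f μ) (hg : AEMeasurable g μ) :
    ∫⁻ x, ∫⁻ y, f (x - y) * g y ∂μ ∂μ = (∫⁻ x, f x ∂μ) * ∫⁻ y, g y ∂μ := by
  rw [lintegral_lintegral_swap (aemeasurable_sub_mul hf hg)]
  calc ∫⁻ y, ∫⁻ x, f (x - y) * g y ∂μ ∂μ = ∫⁻ y, (∫⁻ x, f x ∂μ) * g y ∂μ :=
        lintegral_congr fun y => by
          have : AEMeasurable (fun x => f (x - y)) μ :=
            hf.comp_quasiMeasurePreserving (measurePreserving_sub_right μ y).quasiMeasurePreserving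
          rw [lintegral_mul_const'' _ this, lintegral_sub_right_eq_self f]
    _ = _ := lintegral_const_mul'' _ hg

end Convolution

section GaussianMoments

variable {V : Type*} [NormedAddCommGroup V] [InnerProductSpace ℝ V] [FiniteDimensional ℝ V]
  [MeasurableSpace V] [BorelSpace V]

lemma integrable_exp_neg_mul_sq_norm {b : ℝ} (hb : 0 < b) :
    Integrable fun v : V => rexp (-b * ‖v‖ ^ 2) := by
  refine (GaussianFourier.integrable_cexp_neg_mul_sq_norm_add (V := V) (b := b)
    (by simpa using hb) 0 0).norm.congr (ae_of_all _ fun v => ?_)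
  simp only [zero_mul, add_zero, Complex.norm_exp]
  norm_cast

lemma integrable_norm_pow_mul_exp_neg_mul_sq_norm {b : ℝ} (hb : 0 < b) (j : ℕ) :
    Integrable fun v : V => ‖v‖ ^ j * rexp (-b * ‖v‖ ^ 2) := by
  refine ((integrable_exp_neg_mul_sq_norm hb).add
    ((integrable_exp_neg_mul_sq_norm (half_pos hb)).const_mul
      ((j.factorial : ℝ) * (2 / b) ^ j))).mono' (by fun_prop) (ae_of_all _ fun v => ?_)
  rw [Real.norm_of_nonneg (by positivity)]
  exact pow_mul_exp_neg_mul_sq_le hb (norm_nonneg v) j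

end GaussianMoments

section Monomials

variable {n : ℕ}

lemma msum_mono {α β : Fin n → ℕ} (h : β ≤ α) : msum β ≤ msum α :=
  sum_le_sum fun j _ => h j

lemma msum_sub {α β : Fin n → ℕ} (h : β ≤ α) : msum (α - β) = msum α - msum β := by
  rw [eq_tsub_iff_add_eq_of_le (msum_mono h), msum, msum, msum, ← sum_add_distrib]
  exact sum_congr rfl fun j _ => Nat.sub_add_cancel (h j)

lemma one_le_msum {β : Fin n → ℕ} (h : β ≠ 0) : 1 ≤ msum β := by
  rw [Nat.one_le_iff_ne_zero, Ne, msum, sum_eq_zero_iff]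
  exact fun h' => h (funext fun j => h' j (mem_univ j))

lemma abs_xmon_le_norm_pow (α : Fin n → ℕ) (y : Eu n) : |xmon α y| ≤ ‖y‖ ^ msum α := by
  rw [xmon, msum, abs_prod, ← prod_pow_eq_pow_sum]
  gcongr with j
  rw [abs_pow, ← Real.norm_eq_abs]
  gcongr
  exact PiLp.norm_apply_le y j

lemma piFinset_range_succ_eq_Iic (α : Fin n → ℕ) :
    Fintype.piFinset (fun j => range (α j + 1)) = Iic α := by
  ext β
  simp [Fintype.mem_piFinset, Pi.le_def]

lemma xmon_add_eq_sum (α : Fin n → ℕ) (z y : Eu n) :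
    xmon α (z + y) = ∑ β ∈ Iic α,
      ((∏ j, (α j).choose (β j) : ℕ) : ℝ) * (xmon β z * xmon (α - β) y) := by
  simp only [xmon, PiLp.add_apply, add_pow, prod_univ_sum, piFinset_range_succ_eq_Iic]
  refine sum_congr rfl fun β _ => ?_
  push_cast
  simp only [prod_mul_distrib, Pi.sub_apply]
  ring

lemma sum_prod_choose_eq_two_pow (α : Fin n → ℕ) :
    ∑ β ∈ Iic α, ∏ j, (α j).choose (β j) = 2 ^ msum α := by
  rw [← piFinset_range_succ_eq_Iic, ← prod_univ_sum, msum, ← prod_pow_eq_pow_sum]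
  exact prod_congr rfl fun j _ => Nat.sum_range_choose (α j)

lemma abs_xmon_add_sub_xmon_le (α : Fin n → ℕ) (z y : Eu n) :
    |xmon α (z + y) - xmon α y|
      ≤ 2 ^ msum α * (‖z‖ * ‖y‖ ^ (msum α - 1) + ‖z‖ ^ msum α) := by
  set c : (Fin n → ℕ) → ℝ := fun β => ((∏ j, (α j).choose (β j) : ℕ) : ℝ)
  set R := ‖z‖ * ‖y‖ ^ (msum α - 1) + ‖z‖ ^ msum α
  have h0 : (0 : Fin n → ℕ) ∈ Iic α := mem_Iic.2 (fun j => Nat.zero_le (α j))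
  have hdiff : xmon α (z + y) - xmon α y
      = ∑ β ∈ Iic α \ {0}, c β * (xmon β z * xmon (α - β) y) := by
    rw [xmon_add_eq_sum, ← sum_sdiff (singleton_subset_iff.2 h0), sum_singleton]
    simp [c, xmon]
  have hterm : ∀ β ∈ Iic α \ {0}, |c β * (xmon β z * xmon (α - β) y)| ≤ c β * R := by
    intro β hβ
    obtain ⟨hβ_mem, hβ0⟩ := mem_sdiff.1 hβ
    have hβα : β ≤ α := mem_Iic.1 hβ_mem
    rw [abs_mul, abs_of_nonneg (by positivity), abs_mul]
    gcongr
    calc |xmon β z| * |xmon (α - β) y| ≤ ‖z‖ ^ msum β * ‖y‖ ^ (msum α - msum β) := by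
          rw [← msum_sub hβα]
          gcongr <;> exact abs_xmon_le_norm_pow _ _
      _ ≤ R := pow_mul_pow_sub_le (norm_nonneg z) (norm_nonneg y)
          (one_le_msum (by simpa using hβ0)) (msum_mono hβα)
  calc |xmon α (z + y) - xmon α y| ≤ ∑ β ∈ Iic α \ {0}, c β * R :=
        hdiff ▸ (abs_sum_le_sum_abs _ _).trans (sum_le_sum hterm)
    _ ≤ ∑ β ∈ Iic α, c β * R :=
        sum_le_sum_of_subset_of_nonneg sdiff_subset fun _ _ _ => by positivity
    _ = 2 ^ msum α * R := by
        rw [← sum_mul]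
        congr 1
        simp only [c]
        exact_mod_cast sum_prod_choose_eq_two_pow α

end Monomials

section WeightedL1

variable {n m : ℕ} {φ : Eu n → ℂ}

lemma norm_le_sum_abs (y : Eu n) : ‖y‖ ≤ ∑ j, |y j| := by
  rw [EuclideanSpace.norm_eq, Real.sqrt_le_left (by positivity)]
  simpa only [Real.norm_eq_abs, sq_abs] using
    sum_sq_le_sq_sum_of_nonneg (s := univ) fun j _ => abs_nonneg (y j)

lemma norm_pow_le_sum_multinomial_mul_abs_xmon (y : Eu n) (k : ℕ) :
    ‖y‖ ^ k ≤ ∑ γ ∈ piAntidiag univ k, (Nat.multinomial univ γ : ℝ) * |xmon γ y| := by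
  calc ‖y‖ ^ k ≤ (∑ j, |y j|) ^ k := by gcongr; exact norm_le_sum_abs y
    _ = _ := by simp [sum_pow_eq_sum_piAntidiag, xmon, abs_prod]

lemma L1m.integrable (hφ : L1m m φ) : Integrable φ := by
  simpa [xmon] using hφ 0 (by simp [msum])

lemma L1m.integrable_norm_pow_mul (hφ : L1m m φ) {k : ℕ} (hk : k ≤ m) :
    Integrable fun y => ‖y‖ ^ k * ‖φ y‖ := by
  refine (integrable_finsetSum (piAntidiag univ k) fun γ hγ =>
      ((hφ γ ?_).norm.const_mul (Nat.multinomial univ γ : ℝ))).mono' ?_ (ae_of_all _ fun y => ?_)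
  · exact (mem_piAntidiag.1 hγ).1.trans_le hk
  · exact (continuous_norm.pow k).aestronglyMeasurable.mul hφ.integrable.aestronglyMeasurable.norm
  · rw [Real.norm_of_nonneg (by positivity)]
    calc ‖y‖ ^ k * ‖φ y‖
        ≤ (∑ γ ∈ piAntidiag univ k, (Nat.multinomial univ γ : ℝ) * |xmon γ y|) * ‖φ y‖ := by
          gcongr; exact norm_pow_le_sum_multinomial_mul_abs_xmon y k
      _ = _ := by
          rw [sum_mul]
          simp [mul_assoc]

end WeightedL1

section HeatKernel

variable {n : ℕ} {ν : ℂ} {t : ℝ}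

lemma continuous_Gf : Continuous (Gf n ν t) := by
  unfold Gf
  fun_prop

lemma norm_Gf (z : Eu n) :
    ‖Gf n ν t z‖
      = ‖((4 * π * t : ℝ) * ν) ^ (-(n : ℂ) / 2)‖ * rexp (-((4 * t * ν)⁻¹).re * ‖z‖ ^ 2) := by
  rw [Gf, norm_mul, Complex.norm_exp]
  congr 2
  rw [neg_div, Complex.neg_re, div_eq_mul_inv, Complex.re_ofReal_mul]
  ring

lemma re_inv_four_mul_pos (ht : 0 < t) (hν : 0 < ν.re) : 0 < ((4 * t * ν)⁻¹).re := by
  have hre : 0 < (4 * t * ν).re := by simpa using mul_pos (mul_pos four_pos ht) hν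
  rw [Complex.inv_re]
  exact div_pos hre (Complex.normSq_pos.2 fun h => by simp [h] at hre)

lemma norm_Gf_le (ht : 0 < t) (hν : 0 < ν.re) (z : Eu n) :
    ‖Gf n ν t z‖ ≤ ‖((4 * π * t : ℝ) * ν) ^ (-(n : ℂ) / 2)‖ := by
  rw [norm_Gf]
  refine mul_le_of_le_one_right (norm_nonneg _) (Real.exp_le_one_iff.2 ?_)
  have := re_inv_four_mul_pos ht hν
  nlinarith [sq_nonneg ‖z‖]

lemma integrable_norm_pow_mul_norm_Gf (ht : 0 < t) (hν : 0 < ν.re) (j : ℕ) :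
    Integrable fun z : Eu n => ‖z‖ ^ j * ‖Gf n ν t z‖ := by
  refine ((integrable_norm_pow_mul_exp_neg_mul_sq_norm (re_inv_four_mul_pos ht hν) j).const_mul
    ‖((4 * π * t : ℝ) * ν) ^ (-(n : ℂ) / 2)‖).congr (ae_of_all _ fun z => ?_)
  simp only [norm_Gf]
  ring

lemma Gf_eq_dil (ht : 0 < t) (hν : 0 < ν.re) : Gf n ν t = dil t (Gf n ν 1) := by
  have hν0 : ν ≠ 0 := fun h => by simp [h] at hν
  have hbase : ((4 * π * t : ℝ) : ℂ) * ν = (t : ℂ) * (((4 * π * 1 : ℝ) : ℂ) * ν) := by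
    push_cast; ring
  ext z
  have hsq : ‖(t ^ (-(1 : ℝ) / 2)) • z‖ ^ 2 = t⁻¹ * ‖z‖ ^ 2 := by
    rw [norm_smul, mul_pow, Real.norm_of_nonneg (by positivity), ← Real.rpow_natCast,
      ← Real.rpow_mul ht.le]
    norm_num [Real.rpow_neg_one]
  rw [dil, Gf, Gf, hbase, Complex.ofReal_mul_cpow ht (mul_ne_zero (by norm_num [pi_ne_zero]) hν0),
    Complex.ofReal_cpow ht.le, hsq]
  push_cast
  simp only [mul_one, mul_assoc]
  congr 3
  have ht0 : (t : ℂ) ≠ 0 := Complex.ofReal_ne_zero.2 ht.ne'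
  field_simp

lemma integral_norm_pow_mul_norm_dil (f : Eu n → ℂ) (ht : 0 < t) (j : ℕ) :
    ∫ z, ‖z‖ ^ j * ‖dil t f z‖ = t ^ ((j : ℝ) / 2) * ∫ w, ‖w‖ ^ j * ‖f w‖ := by
  set s := t ^ (-(1 : ℝ) / 2)
  have hs : 0 < s := by positivity
  have hpow (k : ℕ) : s ^ k = t ^ (-(k : ℝ) / 2) := by
    rw [← Real.rpow_natCast, ← Real.rpow_mul ht.le]
    ring_nf
  have hcancel (a : ℝ) : t ^ (a / 2) * t ^ (-a / 2) = 1 := by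
    rw [← Real.rpow_add ht, ← add_div, add_neg_cancel, zero_div, Real.rpow_zero]
  have hpt (z : Eu n) : ‖z‖ ^ j * ‖dil t f z‖
      = (t ^ ((j : ℝ) / 2) * t ^ (-(n : ℝ) / 2)) * (‖s • z‖ ^ j * ‖f (s • z)‖) := by
    rw [dil, norm_mul, Complex.norm_real, Real.norm_of_nonneg (by positivity), norm_smul,
      Real.norm_of_nonneg hs.le, mul_pow, hpow]
    linear_combination (-(‖z‖ ^ j * t ^ (-(n : ℝ) / 2) * ‖f (s • z)‖)) * hcancel j
  simp_rw [hpt]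
  rw [integral_const_mul, Measure.integral_comp_smul_of_nonneg volume (fun w => ‖w‖ ^ j * ‖f w‖) s
    (hR := hs.le), finrank_euclideanSpace_fin, hpow, smul_eq_mul]
  have : t ^ (-(n : ℝ) / 2) ≠ 0 := by positivity
  field_simp

end HeatKernel

noncomputable def gaussMoment (n : ℕ) (ν : ℂ) (j : ℕ) : ℝ := ∫ w : Eu n, ‖w‖ ^ j * ‖Gf n ν 1 w‖

lemma gaussMoment_nonneg (n : ℕ) (ν : ℂ) (j : ℕ) : 0 ≤ gaussMoment n ν j :=
  integral_nonneg fun w => by positivity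

noncomputable def weightedENorm {n : ℕ} (k : ℕ) (f : Eu n → ℂ) (y : Eu n) : ℝ≥0∞ :=
  ENNReal.ofReal (‖y‖ ^ k * ‖f y‖)

section Commutator

variable {n m : ℕ} {ν : ℂ} {t : ℝ} {φ : Eu n → ℂ} {α : Fin n → ℕ}

lemma aemeasurable_weightedENorm (k : ℕ) {f : Eu n → ℂ} (hf : AEStronglyMeasurable f) :
    AEMeasurable (weightedENorm k f) :=
  ENNReal.measurable_ofReal.comp_aemeasurable
    ((continuous_norm.pow k).aemeasurable.mul hf.norm.aemeasurable)

lemma lintegral_weightedENorm {k : ℕ} {f : Eu n → ℂ}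
    (hf : Integrable fun y => ‖y‖ ^ k * ‖f y‖) :
    ∫⁻ y, weightedENorm k f y = ENNReal.ofReal (∫ y, ‖y‖ ^ k * ‖f y‖) :=
  (ofReal_integral_eq_lintegral_ofReal hf (ae_of_all _ fun y => by positivity)).symm

lemma lintegral_weightedENorm_Gf (ht : 0 < t) (hν : 0 < ν.re) (j : ℕ) :
    ∫⁻ z, weightedENorm j (Gf n ν t) z
      = ENNReal.ofReal (t ^ ((j : ℝ) / 2) * gaussMoment n ν j) := by
  rw [lintegral_weightedENorm (integrable_norm_pow_mul_norm_Gf ht hν j), Gf_eq_dil ht hν,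
    integral_norm_pow_mul_norm_dil _ ht, gaussMoment]

lemma cgl_commutator_eq_integral (ht : 0 < t) (hν : 0 < ν.re) (hφ : Integrable φ)
    (hαφ : Integrable fun y => (xmon α y : ℂ) * φ y) (x : Eu n) :
    (xmon α x : ℂ) * cgl n ν t φ x - cgl n ν t (fun y => (xmon α y : ℂ) * φ y) x
      = ∫ y, ((xmon α x - xmon α y : ℝ) : ℂ) * (Gf n ν t (x - y) * φ y) := by
  have hG : AEStronglyMeasurable (fun y => Gf n ν t (x - y)) :=
    (continuous_Gf.comp (continuous_sub_left x)).aestronglyMeasurable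
  have hGb := ae_of_all volume fun y => norm_Gf_le ht hν (x - y)
  rw [cgl, cgl, conv, conv, ← integral_const_mul, ← integral_sub ((hφ.bdd_mul hG hGb).const_mul _)
    (hαφ.bdd_mul hG hGb)]
  congr 1 with y
  push_cast
  ring

lemma enorm_commutator_kernel_le (hα : msum α = m) (g : Eu n → ℂ) (x y : Eu n) :
    ‖((xmon α x - xmon α y : ℝ) : ℂ) * (g (x - y) * φ y)‖ₑ
      ≤ 2 ^ m * (weightedENorm 1 g (x - y) * weightedENorm (m - 1) φ y
        + weightedENorm m g (x - y) * weightedENorm 0 φ y) := by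
  have hpoly := abs_xmon_add_sub_xmon_le α (x - y) y
  rw [sub_add_cancel, hα] at hpoly
  have hreal : ‖((xmon α x - xmon α y : ℝ) : ℂ) * (g (x - y) * φ y)‖
      ≤ 2 ^ m * ((‖x - y‖ ^ 1 * ‖g (x - y)‖) * (‖y‖ ^ (m - 1) * ‖φ y‖)
        + (‖x - y‖ ^ m * ‖g (x - y)‖) * (‖y‖ ^ 0 * ‖φ y‖)) := by
    rw [norm_mul, norm_mul, Complex.norm_real, Real.norm_eq_abs]
    calc _ ≤ 2 ^ m * (‖x - y‖ * ‖y‖ ^ (m - 1) + ‖x - y‖ ^ m) * (‖g (x - y)‖ * ‖φ y‖) := by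
          gcongr
      _ = _ := by ring
  rw [← ofReal_norm]
  refine (ENNReal.ofReal_le_ofReal hreal).trans_eq ?_
  simp only [weightedENorm]
  rw [ENNReal.ofReal_mul (by positivity), ENNReal.ofReal_pow zero_le_two, ENNReal.ofReal_ofNat,
    ENNReal.ofReal_add (by positivity) (by positivity)]
  congr 2 <;> exact ENNReal.ofReal_mul (by positivity)

lemma eLpNorm_cgl_commutator_le_lintegral (ht : 0 < t) (hν : 0 < ν.re) (hφ : L1m m φ)
    (hα : msum α = m) :
    eLpNorm (fun x => (xmon α x : ℂ) * cgl n ν t φ x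
        - cgl n ν t (fun y => (xmon α y : ℂ) * φ y) x) 1 volume
      ≤ 2 ^ m * ((∫⁻ z, weightedENorm 1 (Gf n ν t) z) * (∫⁻ y, weightedENorm (m - 1) φ y)
          + (∫⁻ z, weightedENorm m (Gf n ν t) z) * ∫⁻ y, weightedENorm 0 φ y) := by
  have hG (j : ℕ) : Measurable (weightedENorm j (Gf n ν t)) :=
    ENNReal.measurable_ofReal.comp ((continuous_norm.pow j).mul continuous_Gf.norm).measurable
  have hΦ (k : ℕ) : AEMeasurable (weightedENorm k φ) :=
    aemeasurable_weightedENorm k hφ.integrable.aestronglyMeasurable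
  have hker (x : Eu n) :
      AEMeasurable fun y => weightedENorm 1 (Gf n ν t) (x - y) * weightedENorm (m - 1) φ y :=
    ((hG 1).comp (measurable_const.sub measurable_id)).aemeasurable.mul (hΦ _)
  have hconv : AEMeasurable fun x =>
      ∫⁻ y, weightedENorm 1 (Gf n ν t) (x - y) * weightedENorm (m - 1) φ y :=
    (aemeasurable_sub_mul (hG 1).aemeasurable (hΦ _)).lintegral_prod_right'
  rw [eLpNorm_one_eq_lintegral_enorm, ← lintegral_lintegral_sub_mul (hG 1).aemeasurable (hΦ _),
    ← lintegral_lintegral_sub_mul (hG m).aemeasurable (hΦ 0), ← lintegral_add_left' hconv,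
    ← lintegral_const_mul' _ _ (by simp)]
  refine lintegral_mono fun x => ?_
  rw [cgl_commutator_eq_integral ht hν hφ.integrable (hφ α hα.le) x,
    ← lintegral_add_left' (hker x), ← lintegral_const_mul' _ _ (by simp)]
  exact (enorm_integral_le_lintegral_enorm _).trans
    (lintegral_mono fun y => enorm_commutator_kernel_le hα _ x y)

lemma eLpNorm_cgl_commutator_le (ht : 0 < t) (hν : 0 < ν.re) (hφ : L1m m φ)
    (hα : msum α = m) :
    eLpNorm (fun x => (xmon α x : ℂ) * cgl n ν t φ x
        - cgl n ν t (fun y => (xmon α y : ℂ) * φ y) x) 1 volume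
      ≤ ENNReal.ofReal (2 ^ m * (gaussMoment n ν 1 + gaussMoment n ν m) *
          (t ^ ((1 : ℝ) / 2) * (∫ y, ‖y‖ ^ (m - 1) * ‖φ y‖)
            + (t ^ ((1 : ℝ) / 2) + t ^ ((m : ℝ) / 2)) * ∫ y, ‖φ y‖)) := by
  have hA : 0 ≤ ∫ y, ‖y‖ ^ (m - 1) * ‖φ y‖ := by positivity
  have hB : 0 ≤ ∫ y, ‖φ y‖ := by positivity
  have hM₁ := gaussMoment_nonneg n ν 1
  have hMₘ := gaussMoment_nonneg n ν m
  have hs : 0 ≤ t ^ ((1 : ℝ) / 2) := by positivity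
  have hsₘ : 0 ≤ t ^ ((m : ℝ) / 2) := by positivity
  have ha := mul_nonneg hs hM₁
  have hb := mul_nonneg hsₘ hMₘ
  calc _ ≤ _ := eLpNorm_cgl_commutator_le_lintegral ht hν hφ hα
    _ = ENNReal.ofReal (2 ^ m * (t ^ ((1 : ℝ) / 2) * gaussMoment n ν 1 *
          (∫ y, ‖y‖ ^ (m - 1) * ‖φ y‖) + t ^ ((m : ℝ) / 2) * gaussMoment n ν m * ∫ y, ‖φ y‖)) := by
      rw [lintegral_weightedENorm_Gf ht hν, lintegral_weightedENorm_Gf ht hν,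
        lintegral_weightedENorm (hφ.integrable_norm_pow_mul (Nat.sub_le m 1)),
        lintegral_weightedENorm (hφ.integrable_norm_pow_mul (Nat.zero_le m))]
      simp only [pow_zero, one_mul, Nat.cast_one]
      rw [← ENNReal.ofReal_mul ha, ← ENNReal.ofReal_mul hb,
        ← ENNReal.ofReal_add (mul_nonneg ha hA) (mul_nonneg hb hB),
        ENNReal.ofReal_mul (by positivity : (0 : ℝ) ≤ 2 ^ m), ENNReal.ofReal_pow zero_le_two,
        ENNReal.ofReal_ofNat]
    _ ≤ _ := by
      refine ENNReal.ofReal_le_ofReal ?_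
      have h2 : (0 : ℝ) ≤ 2 ^ m := by positivity
      nlinarith [mul_nonneg (mul_nonneg h2 hMₘ) (mul_nonneg hs hA),
        mul_nonneg (mul_nonneg h2 hM₁) (mul_nonneg hs hB),
        mul_nonneg (mul_nonneg h2 hM₁) (mul_nonneg hsₘ hB),
        mul_nonneg (mul_nonneg h2 hMₘ) (mul_nonneg hs hB)]

end Commutator

lemma msum_of_mem_multiIdx {n k : ℕ} {α : Fin n → ℕ} (h : α ∈ multiIdx n k) : msum α = k :=
  (mem_filter.1 h).2

theorem cgl_commutator_estimate_general (n m : ℕ) (ν : ℂ) (hν : 0 < ν.re) :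
    ∃ C > 0, ∀ (φ : Eu n → ℂ), L1m m φ → ∀ t : ℝ, 0 < t →
      ∑ α ∈ multiIdx n m,
          MeasureTheory.eLpNorm (fun x : Eu n => ((xmon α x : ℝ) : ℂ) * cgl n ν t φ x
              - cgl n ν t (fun y => ((xmon α y : ℝ) : ℂ) * φ y) x) 1 volume
        ≤ ENNReal.ofReal (C * (t ^ ((1:ℝ)/2) * (∫ x : Eu n, ‖x‖^(m-1) * ‖φ x‖)
            + (t ^ ((1:ℝ)/2) + t ^ ((m:ℝ)/2)) * ∫ x : Eu n, ‖φ x‖)) := by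
  set K := 2 ^ m * (gaussMoment n ν 1 + gaussMoment n ν m)
  have hK : 0 ≤ K := mul_nonneg (by positivity)
    (add_nonneg (gaussMoment_nonneg n ν 1) (gaussMoment_nonneg n ν m))
  refine ⟨#(multiIdx n m) * K + 1, by positivity, fun φ hφ t ht => ?_⟩
  set X := t ^ ((1 : ℝ) / 2) * (∫ x : Eu n, ‖x‖ ^ (m - 1) * ‖φ x‖)
    + (t ^ ((1 : ℝ) / 2) + t ^ ((m : ℝ) / 2)) * ∫ x : Eu n, ‖φ x‖
  have hX : 0 ≤ X := by positivity
  calc _ ≤ ∑ α ∈ multiIdx n m, ENNReal.ofReal (K * X) := sum_le_sum fun α hα =>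
        eLpNorm_cgl_commutator_le ht hν hφ (msum_of_mem_multiIdx hα)
    _ = ENNReal.ofReal (#(multiIdx n m) * (K * X)) := by
      rw [sum_const, nsmul_eq_mul, ← ENNReal.ofReal_natCast, ← ENNReal.ofReal_mul (by positivity)]
    _ ≤ ENNReal.ofReal ((#(multiIdx n m) * K + 1) * X) :=
      ENNReal.ofReal_le_ofReal (by linarith)

theorem cgl_commutator_estimate (n m : ℕ) (hm : 0 < m) (ν : ℂ) (hν : 0 < ν.re) :
    ∃ C > 0, ∀ (φ : Eu n → ℂ), L1m m φ → ∀ t : ℝ, 0 < t →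
      ∑ α ∈ multiIdx n m,
          MeasureTheory.eLpNorm (fun x : Eu n => ((xmon α x : ℝ) : ℂ) * cgl n ν t φ x
              - cgl n ν t (fun y => ((xmon α y : ℝ) : ℂ) * φ y) x) 1 volume
        ≤ ENNReal.ofReal (C * (t ^ ((1:ℝ)/2) * (∫ x : Eu n, ‖x‖^(m-1) * ‖φ x‖)
            + (t ^ ((1:ℝ)/2) + t ^ ((m:ℝ)/2)) * ∫ x : Eu n, ‖φ x‖)) :=
  cgl_commutator_estimate_general n m ν hν
end

section
/- Let p > 1 + 2/n, let u₀ ∈ (L¹ ∩ L^∞)(ℝⁿ), and let u be a global mild solution of ∂_t u − νΔu = f(u) satisfying sup_{q∈[1,∞]} sup_{t>0} (1+t)^{(n/2)(1−1/q)} ‖u(t)‖_{L^q} < ∞. Then for every k ∈ ℤ_{≥0} with k < (n/2)(p−1) − 1, the spacetime moment ψ_k := ∫_0^∞ s^k f(u(s)) ds converges absolutely in L¹(ℝⁿ) ∩ L^∞(ℝⁿ) (i.e., ‖ψ_k‖_{L¹} + ‖ψ_k‖_{L^∞} < ∞). -/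
/-! Since `f 0 = 0`, the Lipschitz-type bound gives `‖f ξ‖ ≤ K ‖ξ‖ ^ p`, hence
`‖f (u s)‖_{L¹} ≤ K ‖u s‖_{L^p} ^ p` and `‖f (u s)‖_{L^∞} ≤ K ‖u s‖_{L^∞} ^ p`. By the assumed decay of
`u` both are `O((1 + s) ^ (-(n/2)(p-1)))`, and `s ^ k (1 + s) ^ (-(n/2)(p-1))` is integrable on
`(0, ∞)` as soon as `k < (n/2)(p-1) - 1`. -/

open MeasureTheory Real Filter
open scoped ENNReal Topology BigOperators

theorem le_mul_ofReal_rpow_neg_of_ofReal_rpow_mul_le {x e : ℝ} (hx : 0 < x) {a b : ℝ≥0∞}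
    (h : ENNReal.ofReal (x ^ e) * a ≤ b) : a ≤ b * ENNReal.ofReal (x ^ (-e)) :=
  calc a = ENNReal.ofReal (x ^ (-e)) * (ENNReal.ofReal (x ^ e) * a) := by
        rw [← mul_assoc, ← ENNReal.ofReal_mul (Real.rpow_nonneg hx.le _), ← Real.rpow_add hx,
          neg_add_cancel, Real.rpow_zero, ENNReal.ofReal_one, one_mul]
    _ ≤ b * ENNReal.ofReal (x ^ (-e)) := by rw [mul_comm]; gcongr

section NonlinearBounds

variable {E F : Type*} [NormedAddCommGroup E] [NormedAddCommGroup F] {f : E → F} {K p : ℝ}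

theorem norm_le_mul_norm_rpow_of_map_zero (hp : 1 < p) (hf0 : f 0 = 0)
    (hf : ∀ ξ η, ‖f ξ - f η‖ ≤ K * (‖ξ‖ ^ (p - 1) + ‖η‖ ^ (p - 1)) * ‖ξ - η‖) (ξ : E) :
    ‖f ξ‖ ≤ K * ‖ξ‖ ^ p := by
  have h := hf ξ 0
  rwa [hf0, sub_zero, sub_zero, norm_zero, Real.zero_rpow (by linarith), add_zero, mul_assoc,
    ← Real.rpow_add_one' (norm_nonneg ξ) (by linarith), sub_add_cancel] at h

variable {α : Type*} [MeasurableSpace α] {μ : Measure α}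

theorem eLpNorm_comp_le_of_norm_le_rpow (hp : 0 < p) (hf : ∀ ξ, ‖f ξ‖ ≤ K * ‖ξ‖ ^ p)
    (g : α → E) (r : ℝ≥0∞) :
    eLpNorm (fun x => f (g x)) r μ ≤ ENNReal.ofReal K * eLpNorm g (r * ENNReal.ofReal p) μ ^ p := by
  rw [← eLpNorm_norm_rpow g hp]
  refine eLpNorm_le_mul_eLpNorm_of_ae_le_mul (ae_of_all _ fun x => ?_) r
  rw [Real.norm_of_nonneg (by positivity)]
  exact hf (g x)

theorem eLpNorm_comp_le_of_decay (hp : 0 < p) (hf : ∀ ξ, ‖f ξ‖ ≤ K * ‖ξ‖ ^ p)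
    {g : α → E} {r : ℝ≥0∞} {M x e : ℝ} (hx : 0 < x)
    (hg : ENNReal.ofReal (x ^ e) * eLpNorm g (r * ENNReal.ofReal p) μ ≤ ENNReal.ofReal M) :
    eLpNorm (fun y => f (g y)) r μ
      ≤ ENNReal.ofReal K * ENNReal.ofReal M ^ p * ENNReal.ofReal (x ^ (-(e * p))) :=
  calc eLpNorm (fun y => f (g y)) r μ
      ≤ ENNReal.ofReal K * eLpNorm g (r * ENNReal.ofReal p) μ ^ p :=
        eLpNorm_comp_le_of_norm_le_rpow hp hf g r
    _ ≤ ENNReal.ofReal K * (ENNReal.ofReal M * ENNReal.ofReal (x ^ (-e))) ^ p := by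
        gcongr; exact le_mul_ofReal_rpow_neg_of_ofReal_rpow_mul_le hx hg
    _ = ENNReal.ofReal K * ENNReal.ofReal M ^ p * ENNReal.ofReal (x ^ (-(e * p))) := by
        rw [ENNReal.mul_rpow_of_nonneg _ _ hp.le,
          ENNReal.ofReal_rpow_of_nonneg (Real.rpow_nonneg hx.le _) hp.le, ← Real.rpow_mul hx.le,
          neg_mul, mul_assoc]

end NonlinearBounds

theorem pow_mul_one_add_rpow_neg_le {s : ℝ} (hs : 0 ≤ s) (k : ℕ) (a : ℝ) :
    s ^ k * (1 + s) ^ (-a) ≤ (1 + s) ^ (-(a - k)) := by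
  rw [neg_sub, sub_eq_add_neg, Real.rpow_add (by linarith), Real.rpow_natCast]
  gcongr
  linarith

theorem setLIntegral_Ioi_pow_mul_lt_top {g : ℝ → ℝ≥0∞} {C : ℝ≥0∞} (hC : C ≠ ⊤) {a : ℝ} {k : ℕ}
    (hk : k < a - 1) (hg : ∀ s > 0, g s ≤ C * ENNReal.ofReal ((1 + s) ^ (-a))) :
    ∫⁻ s in Set.Ioi 0, ENNReal.ofReal (s ^ k) * g s < ⊤ := by
  have hint : Integrable fun s : ℝ => (1 + ‖s‖) ^ (-(a - k)) :=
    integrable_one_add_norm (by rw [Module.finrank_self]; push_cast; linarith)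
  have hbound : ∀ s ∈ Set.Ioi (0:ℝ),
      ENNReal.ofReal (s ^ k) * g s ≤ C * ‖(1 + ‖s‖) ^ (-(a - k))‖ₑ := by
    intro s (hs : 0 < s)
    rw [Real.norm_of_nonneg hs.le, Real.enorm_of_nonneg (by positivity)]
    calc ENNReal.ofReal (s ^ k) * g s
        ≤ ENNReal.ofReal (s ^ k) * (C * ENNReal.ofReal ((1 + s) ^ (-a))) := by gcongr; exact hg s hs
      _ = C * ENNReal.ofReal (s ^ k * (1 + s) ^ (-a)) := by
        rw [ENNReal.ofReal_mul (by positivity)]; ring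
      _ ≤ C * ENNReal.ofReal ((1 + s) ^ (-(a - k))) := by
        gcongr; exact pow_mul_one_add_rpow_neg_le hs.le k a
  calc ∫⁻ s in Set.Ioi 0, ENNReal.ofReal (s ^ k) * g s
      ≤ ∫⁻ s in Set.Ioi 0, C * ‖(1 + ‖s‖) ^ (-(a - k))‖ₑ := setLIntegral_mono' measurableSet_Ioi hbound
    _ ≤ ∫⁻ s, C * ‖(1 + ‖s‖) ^ (-(a - k))‖ₑ := setLIntegral_le_lintegral _ _
    _ = C * ∫⁻ s, ‖(1 + ‖s‖) ^ (-(a - k))‖ₑ := lintegral_const_mul' _ _ hC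
    _ < ⊤ := ENNReal.mul_lt_top hC.lt_top hint.2

theorem spacetime_moments_finite_general (n : ℕ)
    (p K : ℝ) (hp1 : 1 < p)
    (f : ℂ → ℂ) (hf0 : f 0 = 0)
    (hf : ∀ ξ η : ℂ, ‖f ξ - f η‖ ≤ K * (‖ξ‖ ^ (p-1) + ‖η‖ ^ (p-1)) * ‖ξ - η‖)
    (u : ℝ → Eu n → ℂ)
    (M : ℝ)
    (hdecay : ∀ q : ℝ≥0∞, 1 ≤ q → ∀ t : ℝ, 0 < t →
      ENNReal.ofReal ((1+t) ^ ((n:ℝ)/2 * (1 - 1/q.toReal)))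
          * MeasureTheory.eLpNorm (u t) q volume ≤ ENNReal.ofReal M)
    (k : ℕ) (hk : (k:ℝ) < (n:ℝ)/2 * (p-1) - 1) :
    ∫⁻ s in Set.Ioi (0:ℝ), ENNReal.ofReal (s ^ k)
        * (MeasureTheory.eLpNorm (fun x => f (u s x)) 1 volume
            + MeasureTheory.eLpNorm (fun x => f (u s x)) ⊤ volume) < ⊤ := by
  set a : ℝ := (n:ℝ)/2 * (p-1) with ha
  set B : ℝ≥0∞ := ENNReal.ofReal K * ENNReal.ofReal M ^ p
  have hp0 : 0 < p := by linarith
  have hfu := norm_le_mul_norm_rpow_of_map_zero hp1 hf0 hf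
  have hL1 : ∀ s > 0,
      eLpNorm (fun x => f (u s x)) 1 volume ≤ B * ENNReal.ofReal ((1 + s) ^ (-a)) := by
    intro s hs
    have hus := hdecay (ENNReal.ofReal p) (by simpa using hp1.le) s hs
    rw [ENNReal.toReal_ofReal hp0.le, ← one_mul (ENNReal.ofReal p)] at hus
    have h := eLpNorm_comp_le_of_decay hp0 hfu (by linarith) hus
    rwa [show (n:ℝ)/2 * (1 - 1/p) * p = a by rw [ha]; field_simp] at h
  have hLtop : ∀ s > 0,
      eLpNorm (fun x => f (u s x)) ⊤ volume ≤ B * ENNReal.ofReal ((1 + s) ^ (-a)) := by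
    intro s hs
    -- `(⊤ : ℝ≥0∞).toReal = 0` makes the exponent `n/2`, as `1/∞ = 0` would.
    have hus := hdecay ⊤ le_top s hs
    rw [ENNReal.toReal_top, div_zero, sub_zero, mul_one,
      ← ENNReal.top_mul (ENNReal.ofReal_pos.mpr hp0).ne'] at hus
    refine (eLpNorm_comp_le_of_decay hp0 hfu (by linarith) hus).trans ?_
    gcongr
    · linarith
    · rw [ha]; gcongr; linarith
  refine setLIntegral_Ioi_pow_mul_lt_top (C := 2 * B) (by finiteness) hk fun s hs => ?_
  rw [two_mul, add_mul]
  exact add_le_add (hL1 s hs) (hLtop s hs)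

theorem spacetime_moments_finite (n : ℕ) (hn : 0 < n) (ν : ℂ) (hν : 0 < ν.re)
    (p K : ℝ) (hK : 0 < K) (hp1 : 1 < p) (hp : 1 + 2/(n:ℝ) < p)
    (f : ℂ → ℂ) (hf0 : f 0 = 0)
    (hf : ∀ ξ η : ℂ, ‖f ξ - f η‖ ≤ K * (‖ξ‖ ^ (p-1) + ‖η‖ ^ (p-1)) * ‖ξ - η‖)
    (u₀ : Eu n → ℂ) (hu₀1 : MeasureTheory.MemLp u₀ 1 volume)
    (hu₀top : MeasureTheory.MemLp u₀ ⊤ volume)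
    (u : ℝ → Eu n → ℂ)
    (hmeas : ∀ t, MeasureTheory.AEStronglyMeasurable (u t) volume)
    (hmild : ∀ t : ℝ, 0 < t → ∀ᵐ x ∂volume,
      u t x = cgl n ν t u₀ x + ∫ s in (0:ℝ)..t, cgl n ν (t-s) (fun y => f (u s y)) x)
    (M : ℝ)
    (hdecay : ∀ q : ℝ≥0∞, 1 ≤ q → ∀ t : ℝ, 0 < t →
      ENNReal.ofReal ((1+t) ^ ((n:ℝ)/2 * (1 - 1/q.toReal)))
          * MeasureTheory.eLpNorm (u t) q volume ≤ ENNReal.ofReal M)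
    (k : ℕ) (hk : (k:ℝ) < (n:ℝ)/2 * (p-1) - 1) :
    ∫⁻ s in Set.Ioi (0:ℝ), ENNReal.ofReal (s ^ k)
        * (MeasureTheory.eLpNorm (fun x => f (u s x)) 1 volume
            + MeasureTheory.eLpNorm (fun x => f (u s x)) ⊤ volume) < ⊤ :=
  spacetime_moments_finite_general n p K hp1 f hf0 hf u M hdecay k hk
end

section
/- Stratification of asymptotic profiles: under the hypotheses of the m-th order asymptotic expansion theorem, for every t > 0 and every k ∈ {0,…,m}, A_k(t) − A_{k−1}(t) = t^{−k/2} δ_t( A_k(1) − A_{k−1}(1) ) (with A_{−1} ≡ 0), and A_k(1) − A_{k−1}(1) = 2^{−k} Σ_{|α|=k} ( M_α(u₀) + Σ_{β+2γ=α, |γ|≤k/2} ((−ν)^{|γ|}/γ!) M_β(ψ_{|γ|}) ) h_{ν,α} G_ν. -/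
open MeasureTheory Real Filter
open scoped ENNReal Topology BigOperators

noncomputable section

/-- spacetime moment ψ_k of the nonlinearity -/
def psiF {n : ℕ} (f : ℂ → ℂ) (u : ℝ → Eu n → ℂ) (k : ℕ) : Eu n → ℂ :=
  fun x => ∫ s in Set.Ioi (0:ℝ), ((s ^ k : ℝ) : ℂ) * f (u s x)

/-- m-th order asymptotic profile A_m(t) -/
def AAprof {n : ℕ} (ν : ℂ) (f : ℂ → ℂ) (u : ℝ → Eu n → ℂ) (u₀ : Eu n → ℂ)
    (m : ℕ) (t : ℝ) : Eu n → ℂ :=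
  fun x => Lam ν 0 m t u₀ x +
    ∑ γ ∈ Finset.Iic (fun _ : Fin n => m),
      if 2 * msum γ ≤ m then
        (-ν) ^ (msum γ) / (mfact γ : ℂ)
          * Lam ν (2 • γ) (m - 2 * msum γ) t (psiF f u (msum γ)) x
      else 0

end

/-! Every profile `Λ_{α,N}(t; φ)` is a sum over the degrees `d = |α| + i`, `i ≤ N`, of terms
carrying the weight `2^{-d} t^{-d/2}` and the sign `(-1)^{|α|}`, which is `1` for `α = 2γ`.
Grouping the terms of `A_m(t)` by total degree `d = 2|γ| + |β|` and substituting `α = 2γ + β`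
writes `A_m(t)` as the sum over `d ≤ m` of layers `2^{-d} t^{-d/2} Σ_{|α| = d} c_α δ_t(h_{ν,α} G_ν)`
whose coefficients `c_α` do not depend on `m`. So `A_k − A_{k−1}` is the `k`-th layer, and
the layer at time `t` is `t^{-k/2} δ_t` of the layer at time `1`. -/

lemma sum_range_shift_ite {M : Type*} [AddCommMonoid M] (F : ℕ → ℕ → M) (g k : ℕ) :
    (if g ≤ k then ∑ i ∈ Finset.range (k - g + 1), F (g + i) i else 0)
      = ∑ j ∈ Finset.range (k + 1), if g ≤ j then F j (j - g) else 0 := by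
  have hfilter : {j ∈ Finset.range (k + 1) | g ≤ j} = Finset.Ico g (k + 1) := by
    ext j; simp only [Finset.mem_filter, Finset.mem_range, Finset.mem_Ico]; omega
  rw [← Finset.sum_filter, hfilter, Finset.sum_Ico_eq_sum_range]
  split_ifs with hg
  · rw [show k + 1 - g = k - g + 1 by omega]
    simp
  · rw [show k + 1 - g = 0 by omega, Finset.sum_range_zero]

section MultiIndex

variable {n : ℕ}

lemma le_msum (γ : Fin n → ℕ) (i : Fin n) : γ i ≤ msum γ :=
  Finset.single_le_sum (fun j _ => Nat.zero_le (γ j)) (Finset.mem_univ i)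

lemma mem_multiIdx {k : ℕ} {β : Fin n → ℕ} : β ∈ multiIdx n k ↔ msum β = k := by
  refine ⟨fun h => (Finset.mem_filter.mp h).2, fun h => Finset.mem_filter.mpr ⟨?_, h⟩⟩
  exact Finset.mem_Iic.mpr fun i => h ▸ le_msum β i

lemma msum_zero : msum (0 : Fin n → ℕ) = 0 := by
  simp [msum]

lemma msum_add (a b : Fin n → ℕ) : msum (a + b) = msum a + msum b := by
  simp [msum, Finset.sum_add_distrib]

lemma msum_two_smul (γ : Fin n → ℕ) : msum (2 • γ) = 2 * msum γ := by
  simp [msum, Finset.mul_sum]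

/-- The substitution `α = 2γ + β`; the box `γ ≤ k` contains every `γ` with `2|γ| ≤ j`. -/
lemma sum_Iic_sum_multiIdx_eq_sum_multiIdx_sum_Iic {M : Type*} [AddCommMonoid M]
    (G : (Fin n → ℕ) → (Fin n → ℕ) → M) {j k : ℕ} (hjk : j ≤ k) :
    ∑ γ ∈ Finset.Iic (fun _ => k),
        (if 2 * msum γ ≤ j then ∑ β ∈ multiIdx n (j - 2 * msum γ), G γ (2 • γ + β) else 0)
      = ∑ α ∈ multiIdx n j, ∑ γ ∈ Finset.Iic α,
          if (∀ i, 2 * γ i ≤ α i) ∧ 2 * msum γ ≤ j then G γ α else 0 := by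
  simp only [← Finset.sum_filter]
  rw [Finset.sum_sigma', Finset.sum_sigma']
  refine Finset.sum_nbij' (fun p => ⟨2 • p.1 + p.2, p.1⟩) (fun p => ⟨p.2, p.1 - 2 • p.2⟩)
    ?_ ?_ ?_ ?_ (fun _ _ => rfl)
  · rintro ⟨γ, β⟩ hp
    simp only [Finset.mem_sigma, Finset.mem_filter, Finset.mem_Iic, mem_multiIdx] at hp ⊢
    obtain ⟨⟨-, hγj⟩, hβ⟩ := hp
    refine ⟨by rw [msum_add, msum_two_smul]; omega, fun i => ?_, fun i => ?_, hγj⟩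
    · simp only [Pi.add_apply, Pi.smul_apply, smul_eq_mul]; omega
    · simp only [Pi.add_apply, Pi.smul_apply, smul_eq_mul]; omega
  · rintro ⟨α, γ⟩ hp
    simp only [Finset.mem_sigma, Finset.mem_filter, Finset.mem_Iic, mem_multiIdx] at hp ⊢
    obtain ⟨hα, -, hγα, hγj⟩ := hp
    have hsplit : msum α = 2 * msum γ + msum (α - 2 • γ) := by
      rw [← msum_two_smul, ← msum_add, add_tsub_cancel_of_le fun i => hγα i]
    exact ⟨⟨fun i => show γ i ≤ k by have := le_msum γ i; omega, hγj⟩, by omega⟩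
  · rintro ⟨γ, β⟩ -
    simp
  · rintro ⟨α, γ⟩ hp
    simp only [Finset.mem_sigma, Finset.mem_filter] at hp
    have hle : 2 • γ ≤ α := fun i => by simpa using hp.2.2.1 i
    rw [add_tsub_cancel_of_le hle]

end MultiIndex

noncomputable def layerWeight (t : ℝ) (d : ℕ) : ℂ :=
  (2 : ℂ) ^ (-(d : ℤ)) * ((t ^ (-(d : ℝ) / 2) : ℝ) : ℂ)

lemma layerWeight_add {t : ℝ} (ht : 0 < t) (a b : ℕ) :
    layerWeight t (a + b) = layerWeight t a * layerWeight t b := by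
  have h2 : (2 : ℂ) ^ (-((a + b : ℕ) : ℤ)) = 2 ^ (-(a : ℤ)) * 2 ^ (-(b : ℤ)) := by
    rw [← zpow_add₀ two_ne_zero]; push_cast; ring_nf
  have ht' : t ^ (-((a + b : ℕ) : ℝ) / 2) = t ^ (-(a : ℝ) / 2) * t ^ (-(b : ℝ) / 2) := by
    rw [← Real.rpow_add ht]; push_cast; ring_nf
  simp only [layerWeight, h2, ht', Complex.ofReal_mul]
  ring

lemma layerWeight_one (d : ℕ) : layerWeight 1 d = (2 : ℂ) ^ (-(d : ℤ)) := by
  simp [layerWeight]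

lemma neg_two_zpow_neg (a : ℕ) : (-2 : ℂ) ^ (-(a : ℤ)) = (-1) ^ a * 2 ^ (-(a : ℤ)) := by
  rw [neg_eq_neg_one_mul (2 : ℂ), mul_zpow, zpow_neg, zpow_natCast, ← inv_pow, inv_neg_one]

lemma Lam_eq_sum_layerWeight {n : ℕ} (ν : ℂ) (α : Fin n → ℕ) (N : ℕ) {t : ℝ} (ht : 0 < t)
    (φ : Eu n → ℂ) (x : Eu n) :
    Lam ν α N t φ x = (-1) ^ msum α * ∑ i ∈ Finset.range (N + 1), layerWeight t (msum α + i) *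
      ∑ β ∈ multiIdx n i, mom β φ * dil t (fun y => hpoly ν (α + β) y * Gf n ν 1 y) x := by
  simp only [Lam, layerWeight_add ht, neg_two_zpow_neg, Finset.mul_sum]
  refine Finset.sum_congr rfl fun i _ => Finset.sum_congr rfl fun β _ => ?_
  simp only [layerWeight]
  ring

section Profile

variable {n : ℕ} (ν : ℂ) (f : ℂ → ℂ) (u : ℝ → Eu n → ℂ) (u₀ : Eu n → ℂ)

noncomputable def layerCoeff (k : ℕ) (α : Fin n → ℕ) : ℂ :=
  mom α u₀ + ∑ γ ∈ Finset.Iic α,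
    if (∀ j, 2 * γ j ≤ α j) ∧ 2 * msum γ ≤ k then
      (-ν) ^ (msum γ) / (mfact γ : ℂ) * mom (α - 2 • γ) (psiF f u (msum γ))
    else 0

noncomputable def profileLayer (k : ℕ) (t : ℝ) (x : Eu n) : ℂ :=
  layerWeight t k * ∑ α ∈ multiIdx n k,
    layerCoeff ν f u u₀ k α * dil t (fun y => hpoly ν α y * Gf n ν 1 y) x

lemma AAprof_eq_sum_profileLayer (k : ℕ) {t : ℝ} (ht : 0 < t) (x : Eu n) :
    AAprof ν f u u₀ k t x = ∑ j ∈ Finset.range (k + 1), profileLayer ν f u u₀ j t x := by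
  set D : (Fin n → ℕ) → ℂ := fun α => dil t (fun y => hpoly ν α y * Gf n ν 1 y) x
  set G : (Fin n → ℕ) → (Fin n → ℕ) → ℂ := fun γ α =>
    (-ν) ^ (msum γ) / (mfact γ : ℂ) * mom (α - 2 • γ) (psiF f u (msum γ)) * D α
  have hlinear : Lam ν 0 k t u₀ x = ∑ j ∈ Finset.range (k + 1),
      layerWeight t j * ∑ α ∈ multiIdx n j, mom α u₀ * D α := by
    simp [Lam_eq_sum_layerWeight ν 0 k ht, msum_zero, D]
  have hterm : ∀ γ : Fin n → ℕ,
      (if 2 * msum γ ≤ k then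
        (-ν) ^ (msum γ) / (mfact γ : ℂ) * Lam ν (2 • γ) (k - 2 * msum γ) t (psiF f u (msum γ)) x
      else 0) = ∑ j ∈ Finset.range (k + 1), layerWeight t j *
        if 2 * msum γ ≤ j then ∑ β ∈ multiIdx n (j - 2 * msum γ), G γ (2 • γ + β) else 0 := by
    intro γ
    simp only [mul_ite, mul_zero]
    rw [← sum_range_shift_ite (fun j i => layerWeight t j *
      ∑ β ∈ multiIdx n i, G γ (2 • γ + β)), Lam_eq_sum_layerWeight ν _ _ ht, msum_two_smul,
      (even_two_mul _).neg_one_pow, one_mul, Finset.mul_sum]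
    refine if_congr Iff.rfl (Finset.sum_congr rfl fun i _ => ?_) rfl
    simp only [Finset.mul_sum, G, D, add_tsub_cancel_left]
    exact Finset.sum_congr rfl fun β _ => by ring
  have hnonlinear : ∑ γ ∈ Finset.Iic (fun _ : Fin n => k),
      (if 2 * msum γ ≤ k then
        (-ν) ^ (msum γ) / (mfact γ : ℂ) * Lam ν (2 • γ) (k - 2 * msum γ) t (psiF f u (msum γ)) x
      else 0) = ∑ j ∈ Finset.range (k + 1), layerWeight t j * ∑ α ∈ multiIdx n j,
        (layerCoeff ν f u u₀ j α - mom α u₀) * D α := by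
    rw [Finset.sum_congr rfl fun γ _ => hterm γ, Finset.sum_comm]
    refine Finset.sum_congr rfl fun j hj => ?_
    rw [← Finset.mul_sum, sum_Iic_sum_multiIdx_eq_sum_multiIdx_sum_Iic G
      (Nat.lt_succ_iff.mp (Finset.mem_range.mp hj))]
    simp only [layerCoeff, add_sub_cancel_left, Finset.sum_mul, ite_mul, zero_mul, G]
  rw [AAprof, hlinear, hnonlinear, ← Finset.sum_add_distrib]
  refine Finset.sum_congr rfl fun j _ => ?_
  rw [profileLayer, ← mul_add, ← Finset.sum_add_distrib]
  simp only [← add_mul, add_sub_cancel, D]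

lemma AAprof_sub_AAprof_pred (k : ℕ) {t : ℝ} (ht : 0 < t) (x : Eu n) :
    AAprof ν f u u₀ k t x - (if k = 0 then 0 else AAprof ν f u u₀ (k - 1) t x)
      = profileLayer ν f u u₀ k t x := by
  cases k with
  | zero => simp [AAprof_eq_sum_profileLayer ν f u u₀ 0 ht]
  | succ j =>
    rw [if_neg j.succ_ne_zero, Nat.add_sub_cancel, AAprof_eq_sum_profileLayer _ _ _ _ _ ht,
      AAprof_eq_sum_profileLayer _ _ _ _ _ ht, Finset.sum_range_succ _ (j + 1), add_sub_cancel_left]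

lemma profileLayer_eq_rpow_mul_dil (k : ℕ) (t : ℝ) (x : Eu n) :
    profileLayer ν f u u₀ k t x
      = ((t ^ (-(k : ℝ) / 2) : ℝ) : ℂ) * dil t (profileLayer ν f u u₀ k 1) x := by
  simp only [profileLayer, layerWeight, dil, Real.one_rpow, Complex.ofReal_one, mul_one,
    one_smul, Finset.mul_sum]
  exact Finset.sum_congr rfl fun α _ => by ring

lemma profileLayer_one (k : ℕ) (x : Eu n) :
    profileLayer ν f u u₀ k 1 x = (2 : ℂ) ^ (-(k : ℤ)) * ∑ α ∈ multiIdx n k,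
      layerCoeff ν f u u₀ k α * (hpoly ν α x * Gf n ν 1 x) := by
  simp [profileLayer, layerWeight_one, dil]

end Profile

theorem profile_stratification_general (n : ℕ) (ν : ℂ)
    (f : ℂ → ℂ)
    (u₀ : Eu n → ℂ)
    (u : ℝ → Eu n → ℂ)
    (t : ℝ) (ht : 0 < t) (k : ℕ) :
    (∀ x, AAprof ν f u u₀ k t x - (if k = 0 then 0 else AAprof ν f u u₀ (k-1) t x)
        = ((t ^ (-(k:ℝ)/2) : ℝ) : ℂ)
            * dil t (fun y => AAprof ν f u u₀ k 1 y
                - (if k = 0 then 0 else AAprof ν f u u₀ (k-1) 1 y)) x) ∧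
    (∀ x, AAprof ν f u u₀ k 1 x - (if k = 0 then 0 else AAprof ν f u u₀ (k-1) 1 x)
        = (2:ℂ) ^ (-(k:ℤ)) * ∑ α ∈ multiIdx n k,
            (mom α u₀ + ∑ γ ∈ Finset.Iic α,
                if (∀ j, 2 * γ j ≤ α j) ∧ 2 * msum γ ≤ k then
                  (-ν) ^ (msum γ) / (mfact γ : ℂ) * mom (α - 2 • γ) (psiF f u (msum γ))
                else 0)
              * (hpoly ν α x * Gf n ν 1 x)) := by
  refine ⟨fun x => ?_, fun x => ?_⟩
  · simp only [AAprof_sub_AAprof_pred ν f u u₀ k ht, AAprof_sub_AAprof_pred ν f u u₀ k one_pos]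
    exact profileLayer_eq_rpow_mul_dil ν f u u₀ k t x
  · rw [AAprof_sub_AAprof_pred ν f u u₀ k one_pos, profileLayer_one]
    rfl

theorem profile_stratification (n : ℕ) (hn : 0 < n) (ν : ℂ) (hν : 0 < ν.re)
    (m : ℕ) (p K : ℝ) (hK : 0 < K) (hp1 : 1 < p) (hp : 1 + ((m:ℝ)+2)/(n:ℝ) < p)
    (f : ℂ → ℂ) (hf0 : f 0 = 0)
    (hf : ∀ ξ η : ℂ, ‖f ξ - f η‖ ≤ K * (‖ξ‖ ^ (p-1) + ‖η‖ ^ (p-1)) * ‖ξ - η‖)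
    (u₀ : Eu n → ℂ) (hu₀ : L1m m u₀) (hu₀top : MeasureTheory.MemLp u₀ ⊤ volume)
    (u : ℝ → Eu n → ℂ)
    (hmeas : ∀ t, MeasureTheory.AEStronglyMeasurable (u t) volume)
    (hmild : ∀ t : ℝ, 0 < t → ∀ᵐ x ∂volume,
      u t x = cgl n ν t u₀ x + ∫ s in (0:ℝ)..t, cgl n ν (t-s) (fun y => f (u s y)) x)
    (M : ℝ)
    (hdecay : ∀ q : ℝ≥0∞, 1 ≤ q → ∀ t : ℝ, 0 < t →
      ENNReal.ofReal ((1+t) ^ ((n:ℝ)/2 * (1 - 1/q.toReal)))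
          * MeasureTheory.eLpNorm (u t) q volume ≤ ENNReal.ofReal M)
    (t : ℝ) (ht : 0 < t) (k : ℕ) (hk : k ≤ m) :
    (∀ x, AAprof ν f u u₀ k t x - (if k = 0 then 0 else AAprof ν f u u₀ (k-1) t x)
        = ((t ^ (-(k:ℝ)/2) : ℝ) : ℂ)
            * dil t (fun y => AAprof ν f u u₀ k 1 y
                - (if k = 0 then 0 else AAprof ν f u u₀ (k-1) 1 y)) x) ∧
    (∀ x, AAprof ν f u u₀ k 1 x - (if k = 0 then 0 else AAprof ν f u u₀ (k-1) 1 x)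
        = (2:ℂ) ^ (-(k:ℤ)) * ∑ α ∈ multiIdx n k,
            (mom α u₀ + ∑ γ ∈ Finset.Iic α,
                if (∀ j, 2 * γ j ≤ α j) ∧ 2 * msum γ ≤ k then
                  (-ν) ^ (msum γ) / (mfact γ : ℂ) * mom (α - 2 • γ) (psiF f u (msum γ))
                else 0)
              * (hpoly ν α x * Gf n ν 1 x)) :=
  profile_stratification_general n ν f u₀ u t ht k
end
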